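/- Let G be a group with finite generating set A whose Cayley graph is Morse local-to-global, and suppose H ≤ G is (M,k)-stable in Cay(G,A). Then the language L_H of all geodesic words over A representing elements of H is regular, and every word in L_H is an M-Morse geodesic word. -/

import Mathlib

open Classical

/-- Evaluation in `G` of a word over the alphabet `A`. -/
def wordEval {G : Type} [Group G] {A : Type} (π : A → G) (w : List A) : G :=
  (w.map π).prod

/-- `π : A → G` generates `G` (positive words suffice; the generating set is
assumed symmetric, see `SymmetricGen`). -/
def Generates {G : Type} [Group G] {A : Type} (π : A → G) : Prop :=
  ∀ g : G, ∃ w : List A, wordEval π w = g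

/-- The generating set is symmetric: `A = A⁻¹`. -/
def SymmetricGen {G : Type} [Group G] {A : Type} (π : A → G) : Prop :=
  ∀ a : A, ∃ b : A, π b = (π a)⁻¹

/-- The word length of `g` with respect to the generating map `π`. -/
noncomputable def wordLength {G : Type} [Group G] {A : Type} (π : A → G) (g : G) : ℕ :=
  sInf {n : ℕ | ∃ w : List A, w.length = n ∧ wordEval π w = g}

/-- The word metric on `G` induced by the generating map `π`. -/
noncomputable def wordDist {G : Type} [Group G] {A : Type} (π : A → G) (g h : G) : ℕ :=
  wordLength π (g⁻¹ * h)

/-- A Morse gauge: a function `M : (k, c) ↦ M(k,c)`. -/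
def MorseGauge : Type := ℝ → ℝ → ℝ

/-- `q : {0,…,n} → G` is a discrete `(k,c)`-quasi-geodesic in the Cayley
graph of `G` with respect to `π`. -/
noncomputable def IsDiscreteQG {G : Type} [Group G] {A : Type} (π : A → G)
    (k c : ℝ) (q : ℕ → G) (n : ℕ) : Prop :=
  ∀ i ≤ n, ∀ j ≤ n,
    (1 / k) * |(i : ℝ) - (j : ℝ)| - c ≤ (wordDist π (q i) (q j) : ℝ) ∧
    (wordDist π (q i) (q j) : ℝ) ≤ k * |(i : ℝ) - (j : ℝ)| + c

/-- `q : {0,…,n} → G` is a discrete geodesic in the Cayley graph. -/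
def IsDiscreteGeodesic {G : Type} [Group G] {A : Type} (π : A → G)
    (q : ℕ → G) (n : ℕ) : Prop :=
  ∀ i ≤ n, ∀ j ≤ n, wordDist π (q i) (q j) = Nat.dist i j

/-- The discrete path `q : {0,…,n} → G` is `M`-Morse: every discrete
`(k,c)`-quasi-geodesic with endpoints on `q` stays within `M k c` of the
subsegment of `q` between those endpoints. -/
def IsMorsePath {G : Type} [Group G] {A : Type} (π : A → G)
    (M : MorseGauge) (q : ℕ → G) (n : ℕ) : Prop :=
  ∀ k c : ℝ, 1 ≤ k → 0 ≤ c →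
    ∀ (p : ℕ → G) (m : ℕ), IsDiscreteQG π k c p m →
      ∀ i j : ℕ, i ≤ j → j ≤ n → p 0 = q i → p m = q j →
        ∀ l ≤ m, ∃ i' : ℕ, i ≤ i' ∧ i' ≤ j ∧ (wordDist π (p l) (q i') : ℝ) ≤ M k c

/-- The path in the Cayley graph labeled by the word `w`, starting at the
identity: `i ↦` the evaluation of the `i`-th prefix of `w`. -/
def wordPath {G : Type} [Group G] {A : Type} (π : A → G) (w : List A) (i : ℕ) : G :=
  wordEval π (w.take i)

/-- `w` is a geodesic word: its length realizes the word length of the element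
it represents. -/
def IsGeodesicWord {G : Type} [Group G] {A : Type} (π : A → G) (w : List A) : Prop :=
  w.length = wordLength π (wordEval π w)

/-- The path labeled by `w` is a `(B; M)`-local Morse geodesic: every subpath
of length at most `B` is an `M`-Morse (geodesic) path. -/
def IsLocalMorseWord {G : Type} [Group G] {A : Type} (π : A → G)
    (M : MorseGauge) (B : ℝ) (w : List A) : Prop :=
  ∀ i j : ℕ, i ≤ j → j ≤ w.length → (j : ℝ) - (i : ℝ) ≤ B →
    IsMorsePath π M (fun t => wordPath π w (i + t)) (j - i)

/-- `q : {0,…,n} → G` is a `(B; M; k, c)`-local Morse quasi-geodesic. -/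
noncomputable def IsLocalMorseQG {G : Type} [Group G] {A : Type} (π : A → G)
    (B : ℝ) (M : MorseGauge) (k c : ℝ) (q : ℕ → G) (n : ℕ) : Prop :=
  ∀ i j : ℕ, i ≤ j → j ≤ n → (j : ℝ) - (i : ℝ) ≤ B →
    IsDiscreteQG π k c (fun t => q (i + t)) (j - i) ∧
    IsMorsePath π M (fun t => q (i + t)) (j - i)

/-- The Cayley graph of `G` with respect to `π` has the Morse local-to-global
property: local Morse quasi-geodesics of sufficiently large local scale are
global Morse quasi-geodesics. -/
noncomputable def MorseLocalToGlobal {G : Type} [Group G] {A : Type} (π : A → G) : Prop :=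
  ∀ (M : MorseGauge) (k c : ℝ), 1 ≤ k → 0 ≤ c →
    ∃ (B : ℝ) (M' : MorseGauge) (k' c' : ℝ), 0 ≤ B ∧ 1 ≤ k' ∧ 0 ≤ c' ∧
      ∀ (q : ℕ → G) (n : ℕ), IsLocalMorseQG π B M k c q n →
        IsDiscreteQG π k' c' q n ∧ IsMorsePath π M' q n

/-- `H` is `(M,k)`-stable in the Cayley graph of `G` with respect to `π`:
every geodesic word from the identity to an element of `H` is `M`-Morse and
all its vertices lie within distance `k` of `H`. -/
def IsStable {G : Type} [Group G] {A : Type} (π : A → G)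
    (H : Subgroup G) (M : MorseGauge) (k : ℕ) : Prop :=
  ∀ h ∈ H, ∀ w : List A, wordEval π w = h → IsGeodesicWord π w →
    IsMorsePath π M (wordPath π w) w.length ∧
    ∀ i ≤ w.length, ∃ h' ∈ H, wordDist π (wordPath π w i) h' ≤ k


/-!
By Myhill–Nerode it suffices that the left quotient of `L_H` at a word `w` is determined by
finitely many data: whether `w` is a prefix of a word of `L_H`, the coset `H g` of its endpoint
`g`, and the `R`-tail `x ↦ |g x| - |g|` on the ball of radius `R`. These are finitely many since
prefixes of words of `L_H` end within `k` of `H` and balls are finite.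

If `w`, `w'` share these data and `w v ∈ L_H`, extend `w'` along `v` letter by letter. Should
`w' v a` fail to be geodesic, stability makes `w' v` and a geodesic to `w' v a` fellow-travel
the Morse geodesic to a nearby point of `H`, so the shortcut passes within `R` of the end of `w'`.
Equal `R`-tails transplant it to a shortcut of `w v a`, a geodesic: a contradiction.
-/

section WordMetric

variable {G : Type} [Group G] {A : Type} (π : A → G)

@[simp]
lemma wordEval_append (u v : List A) : wordEval π (u ++ v) = wordEval π u * wordEval π v := by
  simp [wordEval]

@[simp]
lemma wordEval_singleton (a : A) : wordEval π [a] = π a := by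
  simp [wordEval]

lemma wordLength_le_length (w : List A) : wordLength π (wordEval π w) ≤ w.length :=
  Nat.sInf_le ⟨w, rfl, rfl⟩

lemma exists_isGeodesicWord (hgen : Generates π) (g : G) :
    ∃ w : List A, wordEval π w = g ∧ IsGeodesicWord π w := by
  obtain ⟨w, hw⟩ := hgen g
  obtain ⟨v, hl, he⟩ := Nat.sInf_mem (⟨w.length, w, rfl, hw⟩ :
    {n : ℕ | ∃ w : List A, w.length = n ∧ wordEval π w = g}.Nonempty)
  exact ⟨v, he, by rw [IsGeodesicWord, he]; exact hl⟩

lemma IsGeodesicWord.wordLength_wordEval {π : A → G} {w : List A} (hw : IsGeodesicWord π w) :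
    wordLength π (wordEval π w) = w.length :=
  hw.symm

@[simp]
lemma wordLength_one : wordLength π (1 : G) = 0 :=
  Nat.le_zero.mp (wordLength_le_length π [])

lemma wordLength_mul_le (hgen : Generates π) (g h : G) :
    wordLength π (g * h) ≤ wordLength π g + wordLength π h := by
  obtain ⟨u, rfl, hu⟩ := exists_isGeodesicWord π hgen g
  obtain ⟨v, rfl, hv⟩ := exists_isGeodesicWord π hgen h
  simpa [hu.wordLength_wordEval, hv.wordLength_wordEval] using wordLength_le_length π (u ++ v)

lemma wordLength_inv (hgen : Generates π) (hsym : SymmetricGen π) (g : G) :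
    wordLength π g⁻¹ = wordLength π g := by
  choose inv hinv using hsym
  have key : ∀ x : G, wordLength π x⁻¹ ≤ wordLength π x := fun x => by
    obtain ⟨w, rfl, hw⟩ := exists_isGeodesicWord π hgen x
    have : wordEval π (w.reverse.map inv) = (wordEval π w)⁻¹ := by
      simp [wordEval, List.prod_inv_reverse, hinv, Function.comp_def]
    rw [← this, hw.wordLength_wordEval]
    simpa using wordLength_le_length π (w.reverse.map inv)
  exact le_antisymm (key g) (by simpa using key g⁻¹)

lemma wordLength_le_add_wordDist (hgen : Generates π) (g h : G) :
    wordLength π h ≤ wordLength π g + wordDist π g h := by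
  simpa [wordDist] using wordLength_mul_le π hgen g (g⁻¹ * h)

@[simp]
lemma wordDist_self (g : G) : wordDist π g g = 0 := by
  simp [wordDist]

@[simp]
lemma wordDist_one_left (g : G) : wordDist π 1 g = wordLength π g := by
  simp [wordDist]

@[simp]
lemma wordDist_mul_left (c g h : G) : wordDist π (c * g) (c * h) = wordDist π g h := by
  simp [wordDist, mul_assoc]

lemma wordDist_comm (hgen : Generates π) (hsym : SymmetricGen π) (g h : G) :
    wordDist π g h = wordDist π h g := by
  rw [wordDist, ← wordLength_inv π hgen hsym]
  simp [wordDist]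

lemma wordDist_triangle (hgen : Generates π) (g h x : G) :
    wordDist π g x ≤ wordDist π g h + wordDist π h x := by
  simpa [wordDist, mul_assoc] using wordLength_mul_le π hgen (g⁻¹ * h) (h⁻¹ * x)

lemma abs_wordLength_mul_sub_le (hgen : Generates π) (hsym : SymmetricGen π) (g x : G) :
    |(wordLength π (g * x) : ℤ) - wordLength π g| ≤ wordLength π x := by
  have h₁ := wordLength_mul_le π hgen g x
  have h₂ := wordLength_le_add_wordDist π hgen (g * x) g
  rw [wordDist, mul_inv_rev, inv_mul_cancel_right, wordLength_inv π hgen hsym] at h₂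
  rw [abs_le]
  constructor <;> omega

lemma finite_setOf_wordLength_le [Finite A] (hgen : Generates π) (r : ℕ) :
    {g : G | wordLength π g ≤ r}.Finite := by
  refine ((List.finite_length_le A r).image (wordEval π)).subset fun g hg => ?_
  obtain ⟨w, rfl, hw⟩ := exists_isGeodesicWord π hgen g
  exact ⟨w, by simpa [hw.wordLength_wordEval] using hg, rfl⟩

end WordMetric

section WordPath

variable {G : Type} [Group G] {A : Type} (π : A → G)

@[simp]
lemma wordPath_zero (w : List A) : wordPath π w 0 = 1 := rfl

lemma wordPath_of_length_le {w : List A} {i : ℕ} (h : w.length ≤ i) :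
    wordPath π w i = wordEval π w := by
  rw [wordPath, List.take_of_length_le h]

@[simp]
lemma wordPath_length (w : List A) : wordPath π w w.length = wordEval π w :=
  wordPath_of_length_le π le_rfl

lemma wordPath_append_of_le {u : List A} (v : List A) {i : ℕ} (h : i ≤ u.length) :
    wordPath π (u ++ v) i = wordPath π u i := by
  simp [wordPath, List.take_append, Nat.sub_eq_zero_of_le h]

lemma wordDist_wordPath_le (w : List A) {s t : ℕ} (hst : s ≤ t) :
    wordDist π (wordPath π w s) (wordPath π w t) ≤ t - s := by
  have hsplit : wordPath π w t = wordPath π w s * wordEval π ((w.take t).drop s) := by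
    rw [wordPath, wordPath, ← wordEval_append]
    conv_lhs => rw [← List.take_append_drop s (w.take t), List.take_take, min_eq_left hst]
  rw [hsplit, wordDist, inv_mul_cancel_left]
  exact (wordLength_le_length π _).trans (by simp; omega)

variable {π}

lemma IsGeodesicWord.of_append (hgen : Generates π) {u v : List A}
    (h : IsGeodesicWord π (u ++ v)) : IsGeodesicWord π u := by
  have h₁ := wordLength_mul_le π hgen (wordEval π u) (wordEval π v)
  have h₂ := wordLength_le_length π u
  have h₃ := wordLength_le_length π v
  rw [← wordEval_append, h.wordLength_wordEval, List.length_append] at h₁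
  exact le_antisymm (by omega) h₂

lemma IsGeodesicWord.take (hgen : Generates π) {w : List A} (hw : IsGeodesicWord π w) (i : ℕ) :
    IsGeodesicWord π (w.take i) :=
  (List.take_append_drop i w ▸ hw).of_append hgen

lemma IsGeodesicWord.wordLength_wordPath (hgen : Generates π) {w : List A}
    (hw : IsGeodesicWord π w) {i : ℕ} (hi : i ≤ w.length) :
    wordLength π (wordPath π w i) = i := by
  rw [wordPath, (hw.take hgen i).wordLength_wordEval, List.length_take, min_eq_left hi]

lemma IsGeodesicWord.wordDist_wordPath (hgen : Generates π) {w : List A}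
    (hw : IsGeodesicWord π w) {s t : ℕ} (hst : s ≤ t) (ht : t ≤ w.length) :
    wordDist π (wordPath π w s) (wordPath π w t) = t - s := by
  have h₁ := wordLength_le_add_wordDist π hgen (wordPath π w s) (wordPath π w t)
  rw [hw.wordLength_wordPath hgen ht, hw.wordLength_wordPath hgen (hst.trans ht)] at h₁
  exact le_antisymm (wordDist_wordPath_le π w hst) (by omega)

lemma IsGeodesicWord.wordDist_wordPath_eq_dist (hgen : Generates π) (hsym : SymmetricGen π)
    {w : List A} (hw : IsGeodesicWord π w) {s t : ℕ} (hs : s ≤ w.length)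
    (ht : t ≤ w.length) :
    wordDist π (wordPath π w s) (wordPath π w t) = Nat.dist s t := by
  rcases le_total s t with h | h
  · rw [hw.wordDist_wordPath hgen h ht, Nat.dist_eq_sub_of_le h]
  · rw [wordDist_comm π hgen hsym, hw.wordDist_wordPath hgen h hs, Nat.dist_eq_sub_of_le_right h]

end WordPath

section QuasiGeodesic

variable {G : Type} [Group G] {A : Type} {π : A → G}

lemma IsGeodesicWord.le_wordLength_wordPath_append (hgen : Generates π) (hsym : SymmetricGen π)
    {z : List A} (hz : IsGeodesicWord π z) (s : List A) {j : ℕ} (hj : j ≤ (z ++ s).length) :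
    j ≤ wordLength π (wordPath π (z ++ s) j) + 2 * s.length := by
  have h₁ : wordLength π (wordPath π (z ++ s) (min j z.length)) = min j z.length := by
    rw [wordPath_append_of_le π s (min_le_right _ _),
      hz.wordLength_wordPath hgen (min_le_right _ _)]
  have h₂ := wordDist_wordPath_le π (z ++ s) (min_le_left j z.length)
  have h₃ := wordLength_le_add_wordDist π hgen (wordPath π (z ++ s) j)
    (wordPath π (z ++ s) (min j z.length))
  rw [wordDist_comm π hgen hsym, h₁] at h₃
  simp only [List.length_append] at hj
  omega

lemma IsGeodesicWord.isDiscreteQG_append (hgen : Generates π) (hsym : SymmetricGen π)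
    {z : List A} (hz : IsGeodesicWord π z) (s : List A) {c : ℝ}
    (hc : 2 * (s.length : ℝ) ≤ c) :
    IsDiscreteQG π 1 c (wordPath π (z ++ s)) (z ++ s).length := by
  have key : ∀ i j, i ≤ j → j ≤ (z ++ s).length →
      (j : ℝ) - i - c ≤ wordDist π (wordPath π (z ++ s) i) (wordPath π (z ++ s) j) ∧
      (wordDist π (wordPath π (z ++ s) i) (wordPath π (z ++ s) j) : ℝ) ≤ j - i + c := by
    intro i j hij hj
    have hup := wordDist_wordPath_le π (z ++ s) hij
    have hi : wordLength π (wordPath π (z ++ s) i) ≤ i := by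
      simpa using wordDist_wordPath_le π (z ++ s) (Nat.zero_le i)
    have hj' := hz.le_wordLength_wordPath_append hgen hsym s hj
    have htri :=
      wordLength_le_add_wordDist π hgen (wordPath π (z ++ s) i) (wordPath π (z ++ s) j)
    have hlow :
        j ≤ wordDist π (wordPath π (z ++ s) i) (wordPath π (z ++ s) j) + 2 * s.length + i := by
      omega
    have hc0 : (0 : ℝ) ≤ c := le_trans (by positivity) hc
    constructor
    · have : (j : ℝ) ≤ wordDist π (wordPath π (z ++ s) i) (wordPath π (z ++ s) j)
          + 2 * s.length + i := by exact_mod_cast hlow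
      linarith
    · have : (wordDist π (wordPath π (z ++ s) i) (wordPath π (z ++ s) j) : ℝ) ≤ j - i := by
        rw [← Nat.cast_sub hij]; exact_mod_cast hup
      linarith
  intro i hi j hj
  rcases le_total i j with hij | hij
  · rw [abs_of_nonpos (by simpa using hij)]
    have := key i j hij hj
    constructor <;> linarith
  · rw [abs_of_nonneg (by simpa using hij), wordDist_comm π hgen hsym]
    have := key j i hij hi
    constructor <;> linarith

end QuasiGeodesic

lemma exists_le_le_add_of_succ_le (σ : ℕ → ℕ) {n J τ : ℕ}
    (hstep : ∀ t < n, σ (t + 1) ≤ σ t + J) (h₀ : σ 0 ≤ τ) (hn : τ ≤ σ n) :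
    ∃ t ≤ n, τ ≤ σ t ∧ σ t ≤ τ + J := by
  induction n with
  | zero => exact ⟨0, le_rfl, hn, by omega⟩
  | succ n ih =>
    by_cases h : τ ≤ σ n
    · obtain ⟨t, ht, hτ⟩ := ih (fun t ht => hstep t (by omega)) h
      exact ⟨t, by omega, hτ⟩
    · exact ⟨n + 1, le_rfl, hn, by have := hstep n (by omega); omega⟩

section PathNear

variable {G : Type} [Group G] {A : Type}

def PathNear (π : A → G) (K : ℕ) (p q : List A) : Prop :=
  ∀ i ≤ p.length, ∃ j ≤ q.length, wordDist π (wordPath π p i) (wordPath π q j) ≤ K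

variable {π : A → G} {K K' : ℕ} {p q r : List A}

lemma PathNear.mono (h : PathNear π K p q) (hK : K ≤ K') : PathNear π K' p q :=
  fun i hi => (h i hi).imp fun _ ⟨hj, hd⟩ => ⟨hj, hd.trans hK⟩

lemma PathNear.trans (hgen : Generates π) (hpq : PathNear π K p q) (hqr : PathNear π K' q r) :
    PathNear π (K + K') p r := by
  intro i hi
  obtain ⟨j, hj, hd⟩ := hpq i hi
  obtain ⟨l, hl, hd'⟩ := hqr j hj
  exact ⟨l, hl, (wordDist_triangle π hgen _ _ _).trans (add_le_add hd hd')⟩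

lemma PathNear.of_append {c : List A} (h : PathNear π K (p ++ c) q) : PathNear π K p q := by
  intro i hi
  rw [← wordPath_append_of_le π c hi]
  exact h i (by simp; omega)

lemma pathNear_append (hgen : Generates π) (hsym : SymmetricGen π) (z c : List A) :
    PathNear π c.length (z ++ c) z := by
  intro i hi
  refine ⟨min i z.length, min_le_right _ _, ?_⟩
  rw [← wordPath_append_of_le π c (min_le_right _ _), wordDist_comm π hgen hsym]
  refine (wordDist_wordPath_le π _ (min_le_left _ _)).trans ?_
  simp only [List.length_append] at hi
  omega

lemma PathNear.exists_of_wordEval_eq {γ : List A} (h : PathNear π K q γ)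
    (heq : wordEval π q = wordEval π γ) (t : ℕ) :
    ∃ τ ≤ γ.length, wordDist π (wordPath π q t) (wordPath π γ τ) ≤ K := by
  by_cases ht : t ≤ q.length
  · exact h t ht
  · exact ⟨γ.length, le_rfl, by simp [wordPath_of_length_le π (le_of_not_ge ht), heq]⟩

/-- A nearest-point index `σ t` along `γ` moves by at most `2K + 1` per step of `q`, so by the
discrete intermediate value theorem it passes within `2K + 1` of every index of `γ`. -/
lemma PathNear.symm_of_isGeodesicWord (hgen : Generates π) (hsym : SymmetricGen π)
    {γ : List A} (h : PathNear π K q γ) (hγ : IsGeodesicWord π γ)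
    (heq : wordEval π q = wordEval π γ) : PathNear π (3 * K + 1) γ q := by
  choose σ hσγ hσ using h.exists_of_wordEval_eq heq
  have hdist (τ τ' : ℕ) (hτ : τ ≤ γ.length) (hτ' : τ' ≤ γ.length) :=
    hγ.wordDist_wordPath_eq_dist hgen hsym hτ hτ'
  have hstep : ∀ t < q.length, σ (t + 1) ≤ σ t + (2 * K + 1) := by
    intro t _
    have h₁ := wordDist_triangle π hgen (wordPath π γ (σ t)) (wordPath π q t)
      (wordPath π γ (σ (t + 1)))
    have h₂ := wordDist_triangle π hgen (wordPath π q t) (wordPath π q (t + 1))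
      (wordPath π γ (σ (t + 1)))
    have h₃ := wordDist_wordPath_le π q (Nat.le_add_right t 1)
    rw [hdist _ _ (hσγ t) (hσγ (t + 1)), wordDist_comm π hgen hsym] at h₁
    have := hσ t
    have := hσ (t + 1)
    simp only [Nat.dist] at h₁
    omega
  have h₀ : σ 0 ≤ K := by
    have := hσ 0
    rw [wordPath_zero, ← wordPath_zero π γ, hdist _ _ (Nat.zero_le _) (hσγ 0),
      Nat.dist] at this
    omega
  have hn : γ.length ≤ σ q.length + K := by
    have := hσ q.length
    rw [wordPath_length, heq, ← wordPath_length π γ, hdist _ _ le_rfl (hσγ _),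
      Nat.dist] at this
    omega
  intro τ hτ
  by_cases hlow : τ < σ 0
  · refine ⟨0, Nat.zero_le _, ?_⟩
    rw [wordPath_zero, ← wordPath_zero π γ, hdist _ _ hτ (Nat.zero_le _), Nat.dist]
    omega
  by_cases hhigh : σ q.length < τ
  · refine ⟨q.length, le_rfl, ?_⟩
    rw [wordPath_length, heq, ← wordPath_length π γ, hdist _ _ hτ le_rfl, Nat.dist]
    omega
  obtain ⟨t, ht, hτt, htτ⟩ :=
    exists_le_le_add_of_succ_le σ hstep (not_lt.mp hlow) (not_lt.mp hhigh)
  refine ⟨t, ht, (wordDist_triangle π hgen _ (wordPath π γ (σ t)) _).trans ?_⟩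
  rw [hdist _ _ hτ (hσγ t), wordDist_comm π hgen hsym (wordPath π γ (σ t)), Nat.dist]
  have := hσ t
  omega

lemma IsMorsePath.pathNear {M : MorseGauge} {γ q : List A} {k c : ℝ}
    (hγ : IsMorsePath π M (wordPath π γ) γ.length) (hk : 1 ≤ k) (hc : 0 ≤ c)
    (hq : IsDiscreteQG π k c (wordPath π q) q.length) (heq : wordEval π q = wordEval π γ)
    (hK : M k c ≤ K) : PathNear π K q γ := by
  intro i hi
  obtain ⟨j, -, hj, hd⟩ := hγ k c hk hc _ _ hq 0 γ.length (Nat.zero_le _) le_rfl rfl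
    (by simp [heq]) i hi
  exact ⟨j, hj, by exact_mod_cast hd.trans hK⟩

end PathNear

section Stable

variable {G : Type} [Group G] {A : Type} {π : A → G} {H : Subgroup G} {M : MorseGauge} {k : ℕ}

lemma IsStable.exists_wordDist_le (hstable : IsStable π H M k) {u v : List A}
    (hgeo : IsGeodesicWord π (u ++ v)) (hH : wordEval π (u ++ v) ∈ H) :
    ∃ h ∈ H, wordDist π (wordEval π u) h ≤ k := by
  obtain ⟨h, hh, hd⟩ := (hstable _ hH _ rfl hgeo).2 u.length (by simp)
  exact ⟨h, hh, by rwa [wordPath_append_of_le π v le_rfl, wordPath_length] at hd⟩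

/-- Both paths, extended by a geodesic to the nearby point `h` of `H`, are quasi-geodesics ending
at `h`, so both fellow-travel the `M`-Morse geodesic from `1` to `h`. -/
lemma IsStable.pathNear (hgen : Generates π) (hsym : SymmetricGen π)
    (hstable : IsStable π H M k) {K₀ : ℕ} (hK : M 1 (2 * k + 2) ≤ K₀) {z₀ s z : List A}
    (hz₀ : IsGeodesicWord π z₀) (hs : s.length ≤ 1) (hz : IsGeodesicWord π z)
    (heq : wordEval π (z₀ ++ s) = wordEval π z)
    (hnear : ∃ h ∈ H, wordDist π (wordEval π z) h ≤ k) :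
    PathNear π (4 * K₀ + 1 + k) (z₀ ++ s) z := by
  obtain ⟨h, hH, hd⟩ := hnear
  obtain ⟨c, hc, hcgeo⟩ := exists_isGeodesicWord π hgen ((wordEval π z)⁻¹ * h)
  obtain ⟨γ, rfl, hγ⟩ := exists_isGeodesicWord π hgen h
  have hclen : c.length ≤ k := by rw [← hcgeo.wordLength_wordEval, hc]; exact hd
  have hMorse := (hstable _ hH γ rfl hγ).1
  have hqg {u t : List A} (hu : IsGeodesicWord π u) (ht : t.length ≤ k + 1) :
      IsDiscreteQG π 1 (2 * k + 2) (wordPath π (u ++ t)) (u ++ t).length := by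
    refine hu.isDiscreteQG_append hgen hsym t ?_
    have : (t.length : ℝ) ≤ k + 1 := by exact_mod_cast ht
    linarith
  have hc0 : (0 : ℝ) ≤ 2 * k + 2 := by positivity
  have h₁ : PathNear π K₀ (z₀ ++ (s ++ c)) γ :=
    hMorse.pathNear le_rfl hc0 (hqg hz₀ (by simp; omega))
      (by simp only [wordEval_append, hc, ← heq]; group) hK
  have h₂ : PathNear π K₀ (z ++ c) γ :=
    hMorse.pathNear le_rfl hc0 (hqg hz (by omega)) (by simp [hc]) hK
  rw [← List.append_assoc] at h₁
  have h₃ := h₂.symm_of_isGeodesicWord hgen hsym hγ (by simp [hc])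
  have h₄ := (pathNear_append hgen hsym z c).mono hclen
  exact ((h₁.of_append.trans hgen h₃).trans hgen h₄).mono (by omega)

/-- A geodesic `u` to `z a`, followed by the letter `a⁻¹`, fellow-travels `z`; its vertex of
index `|u| + n - |z| - 1` is the point `p`. -/
lemma IsStable.exists_shortcut (hgen : Generates π) (hsym : SymmetricGen π)
    (hstable : IsStable π H M k) {K₀ : ℕ} (hK : M 1 (2 * k + 2) ≤ K₀) {z : List A}
    (hz : IsGeodesicWord π z) (hnear : ∃ h ∈ H, wordDist π (wordEval π z) h ≤ k) {a : A}
    (ha : ¬ IsGeodesicWord π (z ++ [a])) {n : ℕ} (hn : n ≤ z.length) :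
    ∃ p : G, wordDist π (wordPath π z n) p ≤ 2 * (4 * K₀ + 1 + k) + 2 ∧
      wordLength π p + wordDist π p (wordEval π (z ++ [a])) ≤ z.length := by
  obtain ⟨b, hb⟩ := hsym a
  obtain ⟨u, hu, hugeo⟩ := exists_isGeodesicWord π hgen (wordEval π (z ++ [a]))
  have hlen : u.length ≤ z.length := by
    have := wordLength_le_length π (z ++ [a])
    rw [IsGeodesicWord] at ha
    rw [← hu, hugeo.wordLength_wordEval] at this ha
    simp only [List.length_append, List.length_singleton] at this ha
    omega
  have heq : wordEval π (u ++ [b]) = wordEval π z := by simp [hu, hb]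
  obtain ⟨l, hl_eq⟩ : ∃ l, l = u.length + n - z.length - 1 := ⟨_, rfl⟩
  have hl : l ≤ u.length := by omega
  obtain ⟨τ, hτ, hd⟩ :=
    hstable.pathNear hgen hsym hK hugeo (by simp) hz heq hnear l (by simp; omega)
  rw [wordPath_append_of_le π [b] hl] at hd
  refine ⟨wordPath π u l, ?_, ?_⟩
  · have h₁ := wordLength_le_add_wordDist π hgen (wordPath π u l) (wordPath π z τ)
    rw [hz.wordLength_wordPath hgen hτ, hugeo.wordLength_wordPath hgen hl] at h₁
    have h₂ := wordDist_triangle π hgen (wordPath π z τ) (wordPath π u l) (wordEval π z)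
    rw [wordDist_comm π hgen hsym (wordPath π z τ) (wordPath π u l)] at h₂
    have h₂' : wordDist π (wordPath π z τ) (wordEval π z) = z.length - τ := by
      rw [← wordPath_length π z]
      exact hz.wordDist_wordPath hgen hτ le_rfl
    have h₃ : wordDist π (wordPath π u l) (wordEval π z) ≤ u.length + 1 - l := by
      rw [← heq, ← wordPath_length, ← wordPath_append_of_le π [b] hl]
      simpa using wordDist_wordPath_le π (u ++ [b]) (by simp; omega : l ≤ (u ++ [b]).length)
    have h₄ := wordDist_triangle π hgen (wordPath π z n) (wordPath π z τ) (wordPath π u l)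
    rw [hz.wordDist_wordPath_eq_dist hgen hsym hn hτ, Nat.dist,
      wordDist_comm π hgen hsym (wordPath π z τ) (wordPath π u l)] at h₄
    omega
  · rw [hugeo.wordLength_wordPath hgen hl, ← hu, ← wordPath_length π u,
      hugeo.wordDist_wordPath hgen hl le_rfl]
    omega

end Stable

lemma Language.IsRegular.of_finite_range_of_leftQuotient_eq {α β : Type*} {L : Language α}
    (Φ : List α → β) (hΦ : (Set.range Φ).Finite)
    (h : ∀ x y, Φ x = Φ y → L.leftQuotient x = L.leftQuotient y) : L.IsRegular := by
  refine .of_finite_range_leftQuotient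
    ((hΦ.image fun b => L.leftQuotient (Function.invFun Φ b)).subset ?_)
  rintro _ ⟨x, rfl⟩
  exact ⟨Φ x, ⟨x, rfl⟩, h _ _ (Function.invFun_eq ⟨x, rfl⟩)⟩

section ConeType

variable {G : Type} [Group G] {A : Type} {π : A → G} {H : Subgroup G} {M : MorseGauge} {k : ℕ}

variable (π H) in
def geodesicLanguage : Language A := {w | IsGeodesicWord π w ∧ wordEval π w ∈ H}

@[simp]
lemma mem_geodesicLanguage {w : List A} :
    w ∈ geodesicLanguage π H ↔ IsGeodesicWord π w ∧ wordEval π w ∈ H :=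
  Iff.rfl

variable (π) in
noncomputable def lengthTail (R : ℕ) (g : G) (x : {x : G // wordLength π x ≤ R}) : ℤ :=
  wordLength π (g * x) - wordLength π g

variable (π H) in
/-- `none` off the prefixes of `geodesicLanguage π H`; on a prefix ending at `g`, the `R`-tail
of `g` (Cannon's cone-type data) and the right coset `H g`, encoded as the left coset
of `g⁻¹`. -/
noncomputable def coneKey (R : ℕ) (w : List A) :
    Option (({x : G // wordLength π x ≤ R} → ℤ) × G ⧸ H) :=
  if ∃ v, w ++ v ∈ geodesicLanguage π H then
    some (lengthTail π R (wordEval π w), QuotientGroup.mk (wordEval π w)⁻¹)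
  else none

/-- Were `w' v a` not geodesic, `exists_shortcut` would yield `p` within `R` of the end `g'`
of `w'` through which `w' v a` is shortened; since `g` and `g'` have the same `R`-tail, the point `g g'⁻¹ p` shortens
the geodesic `w v a` in the same way. -/
lemma IsStable.isGeodesicWord_append_singleton (hgen : Generates π) (hsym : SymmetricGen π)
    (hstable : IsStable π H M k) {K₀ : ℕ} (hK : M 1 (2 * k + 2) ≤ K₀) {R : ℕ}
    (hR : 2 * (4 * K₀ + 1 + k) + 2 ≤ R) {w w' v v' : List A} {a : A}
    (hcoset : wordEval π w' * (wordEval π w)⁻¹ ∈ H)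
    (htail : lengthTail π R (wordEval π w) = lengthTail π R (wordEval π w'))
    (hz : IsGeodesicWord π (w' ++ v)) (hgeo : IsGeodesicWord π (w ++ v ++ [a] ++ v'))
    (hH : wordEval π (w ++ v ++ [a] ++ v') ∈ H) : IsGeodesicWord π (w' ++ v ++ [a]) := by
  by_contra hna
  obtain ⟨h, hh, hd⟩ := hstable.exists_wordDist_le (u := w ++ v) (v := [a] ++ v')
    (by simpa using hgeo) (by simpa using hH)
  have hnear : ∃ h ∈ H, wordDist π (wordEval π (w' ++ v)) h ≤ k := by
    refine ⟨wordEval π w' * (wordEval π w)⁻¹ * h, H.mul_mem hcoset hh, ?_⟩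
    rwa [show wordEval π (w' ++ v) =
      wordEval π w' * (wordEval π w)⁻¹ * wordEval π (w ++ v) by simp, wordDist_mul_left]
  obtain ⟨p, hp, hsum⟩ := hstable.exists_shortcut hgen hsym hK hz hnear (a := a)
    (by simpa using hna) (n := w'.length) (by simp)
  rw [wordPath_append_of_le π v le_rfl, wordPath_length] at hp
  have htx := congrFun htail ⟨(wordEval π w')⁻¹ * p, hp.trans hR⟩
  simp only [lengthTail, mul_inv_cancel_left] at htx
  have hw := (show IsGeodesicWord π (w ++ (v ++ [a] ++ v')) by simpa using hgeo).of_append hgen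
  have hw' := hz.of_append hgen
  have hwva := (show IsGeodesicWord π ((w ++ v ++ [a]) ++ v') by simpa using hgeo).of_append hgen
  have htri := wordLength_le_add_wordDist π hgen (wordEval π w * ((wordEval π w')⁻¹ * p))
    (wordEval π (w ++ v ++ [a]))
  have hshift :
      wordDist π (wordEval π w * ((wordEval π w')⁻¹ * p)) (wordEval π (w ++ v ++ [a])) =
        wordDist π p (wordEval π (w' ++ v ++ [a])) := by
    conv_rhs => rw [← mul_inv_cancel_left (wordEval π w') p]
    simp only [wordEval_append, mul_assoc, wordDist_mul_left]
  rw [hwva.wordLength_wordEval, hshift] at htri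
  rw [hw.wordLength_wordEval, hw'.wordLength_wordEval] at htx
  simp only [List.length_append, List.length_singleton] at htri hsum
  omega

lemma IsStable.mem_leftQuotient_of_lengthTail_eq (hgen : Generates π) (hsym : SymmetricGen π)
    (hstable : IsStable π H M k) {K₀ : ℕ} (hK : M 1 (2 * k + 2) ≤ K₀) {R : ℕ}
    (hR : 2 * (4 * K₀ + 1 + k) + 2 ≤ R) {w w' v : List A} (hw' : IsGeodesicWord π w')
    (hcoset :
      (QuotientGroup.mk (wordEval π w)⁻¹ : G ⧸ H) = QuotientGroup.mk (wordEval π w')⁻¹)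
    (htail : lengthTail π R (wordEval π w) = lengthTail π R (wordEval π w'))
    (hv : v ∈ (geodesicLanguage π H).leftQuotient w) :
    v ∈ (geodesicLanguage π H).leftQuotient w' := by
  have hcoset' : wordEval π w' * (wordEval π w)⁻¹ ∈ H := by
    simpa using H.inv_mem (QuotientGroup.eq.mp hcoset)
  have key (v₁ : List A) : ∀ v₂, w ++ v₁ ++ v₂ ∈ geodesicLanguage π H →
      IsGeodesicWord π (w' ++ v₁) := by
    induction v₁ using List.reverseRecOn with
    | nil => exact fun _ _ => by simpa using hw'
    | append_singleton v₁ a ih =>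
      rintro v₂ ⟨hgeo, hH⟩
      rw [← List.append_assoc]
      exact hstable.isGeodesicWord_append_singleton hgen hsym hK hR hcoset' htail
        (ih ([a] ++ v₂) (by simpa using And.intro hgeo hH)) (by simpa using hgeo)
        (by simpa using hH)
  refine ⟨key v [] (by simpa using hv), ?_⟩
  rw [show wordEval π (w' ++ v) =
    wordEval π w' * (wordEval π w)⁻¹ * wordEval π (w ++ v) by simp]
  exact H.mul_mem hcoset' hv.2

lemma IsStable.leftQuotient_eq_of_coneKey_eq (hgen : Generates π) (hsym : SymmetricGen π)
    (hstable : IsStable π H M k) {K₀ : ℕ} (hK : M 1 (2 * k + 2) ≤ K₀) {R : ℕ}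
    (hR : 2 * (4 * K₀ + 1 + k) + 2 ≤ R) {w w' : List A}
    (h : coneKey π H R w = coneKey π H R w') :
    (geodesicLanguage π H).leftQuotient w = (geodesicLanguage π H).leftQuotient w' := by
  have geo {u : List A} (hu : ∃ v, u ++ v ∈ geodesicLanguage π H) : IsGeodesicWord π u := by
    obtain ⟨v, hv, -⟩ := hu
    exact hv.of_append hgen
  unfold coneKey at h
  split_ifs at h with hw hw' hw''
  · obtain ⟨htail, hcoset⟩ := Prod.ext_iff.mp (Option.some_injective _ h)
    ext v
    exact ⟨hstable.mem_leftQuotient_of_lengthTail_eq hgen hsym hK hR (geo hw') hcoset htail,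
      hstable.mem_leftQuotient_of_lengthTail_eq hgen hsym hK hR (geo hw) hcoset.symm htail.symm⟩
  · ext v
    exact ⟨fun hv => absurd ⟨v, hv⟩ hw, fun hv => absurd ⟨v, hv⟩ hw''⟩

lemma IsStable.finite_range_coneKey [Finite A] (hgen : Generates π) (hsym : SymmetricGen π)
    (hstable : IsStable π H M k) (R : ℕ) : (Set.range (coneKey π H R)).Finite := by
  have : Finite {x : G // wordLength π x ≤ R} :=
    (finite_setOf_wordLength_le π hgen R).to_subtype
  have hT :
      {f : {x : G // wordLength π x ≤ R} → ℤ | ∀ x, f x ∈ Set.Icc (-(R : ℤ)) R}.Finite :=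
    Set.Finite.pi' fun _ => Set.finite_Icc _ _
  have hC : (((↑) : G → G ⧸ H) '' {g | wordLength π g ≤ k}).Finite :=
    (finite_setOf_wordLength_le π hgen k).image _
  refine (((hT.prod hC).image some).insert none).subset ?_
  rintro _ ⟨w, rfl⟩
  unfold coneKey
  split_ifs with hw
  · refine Or.inr ⟨_, ⟨fun x => ?_, ?_⟩, rfl⟩
    · have h₁ := abs_wordLength_mul_sub_le π hgen hsym (wordEval π w) x
      exact abs_le.mp (h₁.trans (by exact_mod_cast x.2))
    · obtain ⟨v, hgeo, hH⟩ := hw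
      obtain ⟨h, hh, hd⟩ := hstable.exists_wordDist_le hgeo hH
      exact ⟨(wordEval π w)⁻¹ * h, hd, QuotientGroup.eq.mpr (by simpa using H.inv_mem hh)⟩
  · exact Or.inl rfl

end ConeType

theorem regular_of_stable_general {G : Type} [Group G] {A : Type} [Fintype A]
    (π : A → G) (hgen : Generates π) (hsym : SymmetricGen π)
    (H : Subgroup G) (M : MorseGauge) (k : ℕ) (hstable : IsStable π H M k) :
    Language.IsRegular
        ({w : List A | IsGeodesicWord π w ∧ wordEval π w ∈ H} : Language A) ∧
      ∀ w : List A, IsGeodesicWord π w → wordEval π w ∈ H →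
        IsMorsePath π M (wordPath π w) w.length := by
  refine ⟨?_, fun w hgeo hH => (hstable _ hH w rfl hgeo).1⟩
  have hK := Nat.le_ceil (M 1 (2 * k + 2))
  exact .of_finite_range_of_leftQuotient_eq _ (hstable.finite_range_coneKey hgen hsym _)
    fun _ _ => hstable.leftQuotient_eq_of_coneKey_eq hgen hsym hK le_rfl

/-- If the Cayley graph of `G` is Morse local-to-global and
`H` is `(M,k)`-stable, then the language `L_H` of geodesic words representing
elements of `H` is regular, and all its words are `M`-Morse. -/
theorem regular_of_stable {G : Type} [Group G] {A : Type} [Fintype A]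
    (π : A → G) (hgen : Generates π) (hsym : SymmetricGen π)
    (hltg : MorseLocalToGlobal π)
    (H : Subgroup G) (M : MorseGauge) (k : ℕ) (hstable : IsStable π H M k) :
    Language.IsRegular
        ({w : List A | IsGeodesicWord π w ∧ wordEval π w ∈ H} : Language A) ∧
      ∀ w : List A, IsGeodesicWord π w → wordEval π w ∈ H →
        IsMorsePath π M (wordPath π w) w.length :=
  regular_of_stable_general π hgen hsym H M k hstable
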